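/- arXiv:math/0608318 — 4 statements merged into one kernel-verified Lean document; each statement's English description precedes it below -/
import Mathlib

section
/- Let p be a prime with p ≡ 1 (mod 4) and let a, b, c, d be integers with p ∤ abcd. Then there exists an integer m with p ∤ m, c ≡ m⁴a (mod p) and d ≡ m⁶b (mod p) if and only if both of the following hold: (1) there exists an integer z with c ≡ z⁴a (mod p) (i.e. c·a^{−1} is a biquadratic residue modulo p), and (2) c³b² ≡ d²a³ (mod p). -/
open scoped Classical

lemma key_zmod {p : ℕ} [Fact p.Prime] (hp1 : p % 4 = 1) (A B C D : ZMod p)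
    (hA : A ≠ 0) (hB : B ≠ 0) (hC : C ≠ 0) :
    (∃ M : ZMod p, M ≠ 0 ∧ C = M ^ 4 * A ∧ D = M ^ 6 * B) ↔
      ((∃ Z : ZMod p, C = Z ^ 4 * A) ∧ C ^ 3 * B ^ 2 = D ^ 2 * A ^ 3) := by
  constructor
  · rintro ⟨M, hM, rfl, rfl⟩
    exact ⟨⟨M, rfl⟩, by ring⟩
  · rintro ⟨⟨Z, rfl⟩, h2⟩
    have hZ : Z ≠ 0 := by
      rintro rfl
      simp at hC
    have h3 : D ^ 2 = (Z ^ 6 * B) ^ 2 := by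
      have := mul_right_cancel₀ (pow_ne_zero 3 hA)
        (show D ^ 2 * A ^ 3 = (Z ^ 6 * B) ^ 2 * A ^ 3 by rw [← h2]; ring)
      exact this
    have h4 : (D - Z ^ 6 * B) * (D + Z ^ 6 * B) = 0 := by
      have : D ^ 2 - (Z ^ 6 * B) ^ 2 = 0 := by rw [h3]; ring
      linear_combination this
    rcases mul_eq_zero.mp h4 with h5 | h5
    · exact ⟨Z, hZ, rfl, by linear_combination h5⟩
    · obtain ⟨i, hi⟩ : IsSquare (-1 : ZMod p) := by
        rw [ZMod.exists_sq_eq_neg_one_iff]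
        omega
      have hi' : i * i = -1 := hi.symm
      have hiz : i ≠ 0 := by
        rintro rfl
        simp at hi'
      refine ⟨i * Z, mul_ne_zero hiz hZ, ?_, ?_⟩
      · have : (i * Z) ^ 4 = Z ^ 4 := by
          have : (i * Z) ^ 4 = (i * i) ^ 2 * Z ^ 4 := by ring
          rw [this, hi']; ring
        rw [this]
      · have h6 : (i * Z) ^ 6 = -(Z ^ 6) := by
          have : (i * Z) ^ 6 = (i * i) ^ 3 * Z ^ 6 := by ring
          rw [this, hi']; ring
        rw [h6]
        linear_combination h5

theorem isom_criterion_one_mod_four (p : ℕ) (hp : p.Prime) (hp1 : p % 4 = 1)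
    (a b c d : ℤ) (h : ¬ ((p : ℤ) ∣ a * b * c * d)) :
    (∃ m : ℤ, ¬ ((p : ℤ) ∣ m) ∧ c ≡ m ^ 4 * a [ZMOD (p : ℤ)] ∧ d ≡ m ^ 6 * b [ZMOD (p : ℤ)]) ↔
      ((∃ z : ℤ, c ≡ z ^ 4 * a [ZMOD (p : ℤ)]) ∧
        c ^ 3 * b ^ 2 ≡ d ^ 2 * a ^ 3 [ZMOD (p : ℤ)]) := by
  haveI : Fact p.Prime := ⟨hp⟩
  have habcd : ((a * b * c * d : ℤ) : ZMod p) ≠ 0 := by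
    rwa [Ne, ZMod.intCast_zmod_eq_zero_iff_dvd]
  push_cast at habcd
  have hA : ((a : ZMod p)) ≠ 0 := fun h0 => habcd (by rw [h0]; ring)
  have hB : ((b : ZMod p)) ≠ 0 := fun h0 => habcd (by rw [h0]; ring)
  have hC : ((c : ZMod p)) ≠ 0 := fun h0 => habcd (by rw [h0]; ring)
  have key := key_zmod hp1 (a : ZMod p) (b : ZMod p) (c : ZMod p) (d : ZMod p) hA hB hC
  constructor
  · rintro ⟨m, hm, h1, h2⟩
    have hm' : (m : ZMod p) ≠ 0 :=
      fun h0 => hm ((ZMod.intCast_zmod_eq_zero_iff_dvd _ _).mp h0)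
    -- translate h1 h2 to ZMod
    have h1' : (c : ZMod p) = (m : ZMod p) ^ 4 * a := by
      have := (ZMod.intCast_eq_intCast_iff _ _ _).mpr h1
      push_cast at this; exact this
    have h2' : (d : ZMod p) = (m : ZMod p) ^ 6 * b := by
      have := (ZMod.intCast_eq_intCast_iff _ _ _).mpr h2
      push_cast at this; exact this
    obtain ⟨⟨Z, hZ⟩, he⟩ := key.mp ⟨(m : ZMod p), hm', h1', h2'⟩
    refine ⟨⟨(ZMod.cast Z : ℤ), ?_⟩, ?_⟩
    · rw [← ZMod.intCast_eq_intCast_iff]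
      push_cast [ZMod.intCast_zmod_cast]
      exact hZ
    · rw [← ZMod.intCast_eq_intCast_iff]
      push_cast
      exact he
  · rintro ⟨⟨z, hz⟩, he⟩
    have hz' : (c : ZMod p) = (z : ZMod p) ^ 4 * a := by
      have := (ZMod.intCast_eq_intCast_iff _ _ _).mpr hz
      push_cast at this; exact this
    have he' : (c : ZMod p) ^ 3 * b ^ 2 = (d : ZMod p) ^ 2 * a ^ 3 := by
      have := (ZMod.intCast_eq_intCast_iff _ _ _).mpr he
      push_cast at this; exact this
    obtain ⟨M, hM, h1', h2'⟩ := key.mpr ⟨⟨(z : ZMod p), hz'⟩, he'⟩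
    refine ⟨(ZMod.cast M : ℤ), ?_, ?_, ?_⟩
    · intro hd
      apply hM
      rw [← ZMod.intCast_zmod_cast M]
      exact (ZMod.intCast_zmod_eq_zero_iff_dvd _ _).mpr hd
    · rw [← ZMod.intCast_eq_intCast_iff]
      push_cast [ZMod.intCast_zmod_cast]
      exact h1'
    · rw [← ZMod.intCast_eq_intCast_iff]
      push_cast [ZMod.intCast_zmod_cast]
      exact h2'
end

section
/- Let p be a prime with p ≡ 3 (mod 4) and let a, b, c, d be integers with p ∤ abcd. Then there exists an integer m with p ∤ m, c ≡ m⁴a (mod p) and d ≡ m⁶b (mod p) if and only if all of the following hold: (1) there exists an integer y with c ≡ y²a (mod p), (2) there exists an integer z with d ≡ z²b (mod p), and (3) c³b² ≡ d²a³ (mod p). -/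
open scoped Classical

lemma aux_sqrt_three_mod_four (p : ℕ) (hp : p.Prime) (hp3 : p % 4 = 3) (Y Z : ZMod p)
    (hY : Y ≠ 0) (hZ : Z ≠ 0) (h6 : Y ^ 6 = Z ^ 4) :
    ∃ M : ZMod p, M ≠ 0 ∧ M ^ 4 = Y ^ 2 ∧ M ^ 6 = Z ^ 2 := by
  haveI : Fact p.Prime := ⟨hp⟩
  obtain ⟨j, hj⟩ : ∃ j, p = 4 * j + 3 := ⟨p / 4, by omega⟩
  have hYp : Y ^ (4 * j + 2) = 1 := by
    have := ZMod.pow_card_sub_one_eq_one hY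
    rwa [show p - 1 = 4 * j + 2 by omega] at this
  have hZp : Z ^ (4 * j + 2) = 1 := by
    have := ZMod.pow_card_sub_one_eq_one hZ
    rwa [show p - 1 = 4 * j + 2 by omega] at this
  refine ⟨Y ^ (j + 1), pow_ne_zero _ hY, ?_, ?_⟩
  · calc (Y ^ (j + 1)) ^ 4 = Y ^ (4 * j + 2) * Y ^ 2 := by
          rw [← pow_add, ← pow_mul]; congr 1; omega
        _ = Y ^ 2 := by rw [hYp, one_mul]
  · calc (Y ^ (j + 1)) ^ 6 = (Y ^ 6) ^ (j + 1) := by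
          rw [← pow_mul, ← pow_mul]; congr 1; omega
        _ = (Z ^ 4) ^ (j + 1) := by rw [h6]
        _ = Z ^ (4 * j + 2) * Z ^ 2 := by rw [← pow_add, ← pow_mul]; ring_nf
        _ = Z ^ 2 := by rw [hZp, one_mul]

theorem isom_criterion_three_mod_four (p : ℕ) (hp : p.Prime) (hp3 : p % 4 = 3)
    (a b c d : ℤ) (h : ¬ ((p : ℤ) ∣ a * b * c * d)) :
    (∃ m : ℤ, ¬ ((p : ℤ) ∣ m) ∧ c ≡ m ^ 4 * a [ZMOD (p : ℤ)] ∧ d ≡ m ^ 6 * b [ZMOD (p : ℤ)]) ↔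
      ((∃ y : ℤ, c ≡ y ^ 2 * a [ZMOD (p : ℤ)]) ∧ (∃ z : ℤ, d ≡ z ^ 2 * b [ZMOD (p : ℤ)]) ∧
        c ^ 3 * b ^ 2 ≡ d ^ 2 * a ^ 3 [ZMOD (p : ℤ)]) := by
  haveI : Fact p.Prime := ⟨hp⟩
  have key : ∀ x y : ℤ, x ≡ y [ZMOD (p : ℤ)] ↔ ((x : ZMod p) = (y : ZMod p)) :=
    fun x y => (ZMod.intCast_eq_intCast_iff x y p).symm
  have nz : ∀ x : ℤ, ¬ (p : ℤ) ∣ x → ((x : ZMod p) ≠ 0) := fun x hx => by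
    rwa [Ne, ZMod.intCast_zmod_eq_zero_iff_dvd]
  have ha : ((a : ZMod p)) ≠ 0 := nz a fun hh => h (((hh.mul_right b).mul_right c).mul_right d)
  have hb : ((b : ZMod p)) ≠ 0 := nz b fun hh => h (((hh.mul_left a).mul_right c).mul_right d)
  have hc : ((c : ZMod p)) ≠ 0 := nz c fun hh => h ((hh.mul_left (a * b)).mul_right d)
  have hd : ((d : ZMod p)) ≠ 0 := nz d fun hh => h (hh.mul_left (a * b * c))
  constructor
  · rintro ⟨m, hm, h1, h2⟩
    rw [key] at h1 h2
    push_cast at h1 h2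
    refine ⟨⟨m ^ 2, ?_⟩, ⟨m ^ 3, ?_⟩, ?_⟩
    · rw [key]; push_cast; rw [h1]; ring
    · rw [key]; push_cast; rw [h2]; ring
    · rw [key]; push_cast; rw [h1, h2]; ring
  · rintro ⟨⟨y, h1⟩, ⟨z, h2⟩, h3⟩
    rw [key] at h1 h2 h3
    push_cast at h1 h2 h3
    have hy : ((y : ZMod p)) ≠ 0 := by
      intro hy0
      apply hc
      rw [h1, hy0]; ring
    have hz : ((z : ZMod p)) ≠ 0 := by
      intro hz0
      apply hd
      rw [h2, hz0]; ring
    have h6 : (y : ZMod p) ^ 6 = (z : ZMod p) ^ 4 := by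
      have hmul : (y : ZMod p) ^ 6 * ((a : ZMod p) ^ 3 * (b : ZMod p) ^ 2)
          = (z : ZMod p) ^ 4 * ((a : ZMod p) ^ 3 * (b : ZMod p) ^ 2) := by
        linear_combination h3 - (↑c ^ 2 + ↑c * ↑y ^ 2 * ↑a + ↑y ^ 4 * ↑a ^ 2) * ↑b ^ 2 * h1
          + (↑d + ↑z ^ 2 * ↑b) * ↑a ^ 3 * h2
      exact mul_right_cancel₀ (mul_ne_zero (pow_ne_zero _ ha) (pow_ne_zero _ hb)) hmul
    obtain ⟨M, hM, hM4, hM6⟩ := aux_sqrt_three_mod_four p hp hp3 _ _ hy hz h6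
    obtain ⟨m, rfl⟩ := ZMod.intCast_surjective M
    refine ⟨m, ?_, ?_, ?_⟩
    · rw [← ZMod.intCast_zmod_eq_zero_iff_dvd]; exact hM
    · rw [key]; push_cast; rw [h1, ← hM4]
    · rw [key]; push_cast; rw [h2, ← hM6]
end

section
/- There exists an absolute constant C > 0 such that for all real u ≥ 0 and v ≥ 1, one has | Σ_{u < r ≤ u+v} K_r − v | ≤ C, where r runs over positive integers with u < r ≤ u + v. -/
open scoped Classical

/-- `K_r = ∏_{ℓ | r} (1 - ℓ⁻²)⁻¹ · ∏_{ℓ ∤ r} ℓ(ℓ² - ℓ - 1)/((ℓ-1)(ℓ²-1))`, products over primes. -/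
noncomputable def Kr (r : ℕ) : ℝ :=
  (∏ l ∈ r.primeFactors, (1 - ((l : ℝ) ^ 2)⁻¹)⁻¹) *
    ∏' l : {l : ℕ // l.Prime ∧ ¬ (l ∣ r)},
      ((l.1 : ℝ) * ((l.1 : ℝ) ^ 2 - l.1 - 1)) / (((l.1 : ℝ) - 1) * ((l.1 : ℝ) ^ 2 - 1))

/-!
For `r ≠ 0` the Euler product in `K_r` factors as `K_r = S⁻¹ ∏_{p ∣ r} (1 + w p)` with
`w p = 1 / (p² - p - 1)` and `S = ∏_p (1 + w p / p)`. Extending `w` to the multiplicative function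
supported on squarefree numbers, `∏_{p ∣ r} (1 + w p) = ∑_{d ∣ r} w d` and `S = ∑_d w d / d`.
Exchanging summations, `∑_{a < r ≤ b} ∑_{d ∣ r} w d = ∑_d w d (⌊b / d⌋ - ⌊a / d⌋)`, which differs
from `(b - a) S` by at most `∑_d w d`; this is finite because `w p = O(p⁻²)`. Finally
`b - a = ⌊u + v⌋ - ⌊u⌋` is within `1` of `v`.
-/

open Finset ArithmeticFunction
open scoped ArithmeticFunction.zeta

namespace ArithmeticFunction

variable {R : Type*}

def sqfreeProd [CommMonoidWithZero R] (g : ℕ → R) : ArithmeticFunction R :=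
  ⟨fun d ↦ if Squarefree d then ∏ p ∈ d.primeFactors, g p else 0, if_neg not_squarefree_zero⟩

section CommMonoidWithZero

variable [CommMonoidWithZero R] (g : ℕ → R)

theorem sqfreeProd_apply (d : ℕ) :
    sqfreeProd g d = if Squarefree d then ∏ p ∈ d.primeFactors, g p else 0 :=
  rfl

theorem sqfreeProd_apply_prime {p : ℕ} (hp : p.Prime) : sqfreeProd g p = g p := by
  rw [sqfreeProd_apply, if_pos hp.squarefree, hp.primeFactors, prod_singleton]

theorem sqfreeProd_apply_prime_pow_of_two_le {p e : ℕ} (hp : p.Prime) (he : 2 ≤ e) :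
    sqfreeProd g (p ^ e) = 0 := by
  rw [sqfreeProd_apply, if_neg]
  rw [Nat.squarefree_pow_iff hp.ne_one (by omega)]
  omega

theorem isMultiplicative_sqfreeProd : (sqfreeProd g).IsMultiplicative := by
  rw [IsMultiplicative.iff_ne_zero]
  refine ⟨by simp [sqfreeProd_apply], fun {m n} hm hn hmn ↦ ?_⟩
  simp only [sqfreeProd_apply, Nat.squarefree_mul hmn]
  by_cases hsm : Squarefree m <;> by_cases hsn : Squarefree n <;>
    simp [hsm, hsn, Nat.primeFactors_mul hm hn, prod_union hmn.disjoint_primeFactors]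

end CommMonoidWithZero

section CommSemiring

variable [CommSemiring R] (g : ℕ → R)

theorem sum_range_sqfreeProd_prime_pow {p k : ℕ} (hp : p.Prime) (hk : 1 ≤ k) :
    ∑ e ∈ range (k + 1), sqfreeProd g (p ^ e) = 1 + g p := by
  induction k, hk using Nat.le_induction with
  | base =>
    simp [sum_range_succ, (isMultiplicative_sqfreeProd g).map_one, sqfreeProd_apply_prime g hp]
  | succ k hk ih =>
    rw [sum_range_succ, ih, sqfreeProd_apply_prime_pow_of_two_le g hp (by omega), add_zero]

theorem sqfreeProd_mul_zeta : sqfreeProd g * ζ = prodPrimeFactors fun p ↦ 1 + g p := by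
  refine (IsMultiplicative.eq_iff_eq_on_prime_powers _ ((isMultiplicative_sqfreeProd g).mul
    isMultiplicative_zeta.natCast) _ (IsMultiplicative.prodPrimeFactors _)).2 fun p k hp ↦ ?_
  rcases Nat.eq_zero_or_pos k with rfl | hk
  · simp [(isMultiplicative_sqfreeProd g).map_one]
  rw [coe_mul_zeta_apply, Nat.sum_divisors_prime_pow hp, sum_range_sqfreeProd_prime_pow g hp hk,
    prodPrimeFactors_apply (pow_ne_zero _ hp.ne_zero), Nat.primeFactors_prime_pow hk.ne' hp,
    prod_singleton]

end CommSemiring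

theorem sqfreeProd_div_self [Field R] (g : ℕ → R) (d : ℕ) :
    sqfreeProd (fun p ↦ g p / p) d = sqfreeProd g d / d := by
  by_cases hd : Squarefree d
  · rw [sqfreeProd_apply, sqfreeProd_apply, if_pos hd, if_pos hd, prod_div_distrib]
    rw [← Nat.cast_prod, Nat.prod_primeFactors_of_squarefree hd]
  · simp [sqfreeProd_apply, hd]

section Real

variable {g : ℕ → ℝ}

theorem sqfreeProd_nonneg (hg : ∀ p, p.Prime → 0 ≤ g p) (d : ℕ) : 0 ≤ sqfreeProd g d := by
  rw [sqfreeProd_apply]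
  split_ifs
  · exact prod_nonneg fun p hp ↦ hg p (Nat.prime_of_mem_primeFactors hp)
  · exact le_rfl

theorem sum_sqfreeProd_le_exp (hg : ∀ p, p.Prime → 0 ≤ g p)
    (hs : Summable fun p : Nat.Primes ↦ g p) (A : Finset ℕ) :
    ∑ d ∈ A, sqfreeProd g d ≤ Real.exp (∑' p : Nat.Primes, g p) := by
  -- every squarefree `d ∈ A` divides the primorial `N` of `max A`
  set N := primorial (A.sup id)
  have hA : ∑ d ∈ A, sqfreeProd g d ≤ ∑ d ∈ N.divisors, sqfreeProd g d := by
    rw [← sum_filter_of_ne (p := Squarefree) (f := sqfreeProd g)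
      fun d _ h ↦ by_contra fun hd ↦ h (if_neg hd)]
    refine sum_le_sum_of_subset_of_nonneg (fun d hd ↦ ?_) fun d _ _ ↦ sqfreeProd_nonneg hg d
    obtain ⟨hdA, hd⟩ := mem_filter.1 hd
    exact Nat.mem_divisors.2
      ⟨hd.dvd_primorial.trans (primorial_dvd_primorial (le_sup (f := id) hdA)),
        primorial_ne_zero _⟩
  have hprimes : ∀ p ∈ N.primeFactors, p.Prime := fun p hp ↦ Nat.prime_of_mem_primeFactors hp
  calc ∑ d ∈ A, sqfreeProd g d
      ≤ ∏ p ∈ N.primeFactors, (1 + g p) := by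
        rwa [← coe_mul_zeta_apply, sqfreeProd_mul_zeta,
          prodPrimeFactors_apply (primorial_ne_zero _)] at hA
    _ ≤ ∏ p ∈ N.primeFactors, Real.exp (g p) :=
        prod_le_prod (fun p hp ↦ by linarith [hg p (hprimes p hp)])
          fun p _ ↦ by linarith [Real.add_one_le_exp (g p)]
    _ = Real.exp (∑ p ∈ N.primeFactors.subtype Nat.Prime, g p) := by
        rw [← Real.exp_sum, sum_subtype_of_mem g hprimes]
    _ ≤ Real.exp (∑' p : Nat.Primes, g p) :=
        Real.exp_le_exp.2 (Summable.sum_le_tsum (L := SummationFilter.unconditional Nat.Primes)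
          (N.primeFactors.subtype Nat.Prime : Finset Nat.Primes) (fun p _ ↦ hg p p.2) hs)

theorem summable_sqfreeProd (hg : ∀ p, p.Prime → 0 ≤ g p)
    (hs : Summable fun p : Nat.Primes ↦ g p) : Summable (sqfreeProd g) :=
  summable_of_sum_le (sqfreeProd_nonneg hg) (sum_sqfreeProd_le_exp hg hs)

theorem hasProd_one_add_sqfreeProd (hg : ∀ p, p.Prime → 0 ≤ g p)
    (hs : Summable fun p : Nat.Primes ↦ g p) :
    HasProd ({p | p.Prime}.mulIndicator fun p ↦ 1 + g p) (∑' d, sqfreeProd g d) := by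
  have hmul := isMultiplicative_sqfreeProd g
  have hfactor : ∀ p ∈ {p | p.Prime}, ∑' e, sqfreeProd g (p ^ e) = 1 + g p := fun p hp ↦ by
    rw [tsum_eq_sum (s := range 2) fun e he ↦ sqfreeProd_apply_prime_pow_of_two_le g hp
      (by simp at he; omega), sum_range_sqfreeProd_prime_pow g hp le_rfl]
  rw [← Set.mulIndicator_congr hfactor]
  exact EulerProduct.eulerProduct_hasProd_mulIndicator hmul.map_one
    (fun {m n} h ↦ hmul.map_mul_of_coprime h)
    ((summable_sqfreeProd hg hs).congr fun d ↦
      (Real.norm_of_nonneg (sqfreeProd_nonneg hg d)).symm)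
    (sqfreeProd g).map_zero

end Real

theorem sub_sum_Ioc_mul_zeta_mem_Icc {w : ArithmeticFunction ℝ} (hw : ∀ n, 0 ≤ w n)
    (hs : Summable w) (N : ℕ) :
    N * ∑' d, w d / d - ∑ n ∈ Ioc 0 N, (w * ζ) n ∈ Set.Icc 0 (∑' d, w d) := by
  have hdiv : Summable fun d ↦ w d / d :=
    hs.of_nonneg_of_le (fun d ↦ div_nonneg (hw d) d.cast_nonneg) fun d ↦ by
      rcases Nat.eq_zero_or_pos d with rfl | hd
      · simp
      · exact div_le_self (hw d) (by exact_mod_cast hd)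
  have hfloor : HasSum (fun d ↦ w d * ((N / d : ℕ) : ℝ)) (∑ n ∈ Ioc 0 N, (w * ζ) n) := by
    rw [sum_Ioc_mul_zeta_eq_sum]
    refine hasSum_sum_of_ne_finset_zero fun d hd ↦ ?_
    rcases Nat.eq_zero_or_pos d with rfl | hd0
    · simp
    · simp [Nat.div_eq_of_lt (by simpa [hd0] using hd : N < d)]
  have hfrac : ∀ d : ℕ, (N : ℝ) / d - ((N / d : ℕ) : ℝ) ∈ Set.Icc 0 1 := fun d ↦ by
    rw [← Nat.floor_div_eq_div (K := ℝ)]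
    have := Nat.lt_floor_add_one ((N : ℝ) / d)
    have := Nat.floor_le (by positivity : (0 : ℝ) ≤ N / d)
    constructor <;> linarith
  have hterm : ∀ d, w d * ((N : ℝ) / d - ((N / d : ℕ) : ℝ)) ∈ Set.Icc 0 (w d) := fun d ↦
    ⟨mul_nonneg (hw d) (hfrac d).1, mul_le_of_le_one_right (hw d) (hfrac d).2⟩
  have hsumm : Summable fun d ↦ w d * ((N : ℝ) / d - ((N / d : ℕ) : ℝ)) :=
    hs.of_nonneg_of_le (fun d ↦ (hterm d).1) fun d ↦ (hterm d).2
  have heq : N * ∑' d, w d / d - ∑ n ∈ Ioc 0 N, (w * ζ) n =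
      ∑' d, w d * ((N : ℝ) / d - ((N / d : ℕ) : ℝ)) := by
    rw [← hfloor.tsum_eq, ← tsum_mul_left, sub_eq_iff_eq_add, ← hsumm.tsum_add hfloor.summable]
    exact tsum_congr fun d ↦ by ring
  rw [heq]
  exact ⟨tsum_nonneg fun d ↦ (hterm d).1, hsumm.tsum_le_tsum (fun d ↦ (hterm d).2) hs⟩

theorem abs_sum_Ioc_mul_zeta_sub_le {w : ArithmeticFunction ℝ} (hw : ∀ n, 0 ≤ w n)
    (hs : Summable w) {a b : ℕ} (hab : a ≤ b) :
    |∑ n ∈ Ioc a b, (w * ζ) n - ((b : ℝ) - a) * ∑' d, w d / d| ≤ ∑' d, w d := by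
  have ha := sub_sum_Ioc_mul_zeta_mem_Icc hw hs a
  have hb := sub_sum_Ioc_mul_zeta_mem_Icc hw hs b
  rw [← sum_Ioc_consecutive _ (Nat.zero_le a) hab] at hb
  rw [abs_le]
  constructor <;> linarith [ha.1, ha.2, hb.1, hb.2]

end ArithmeticFunction

theorem HasProd.mulIndicator_not_dvd {K : Type*} [CommGroupWithZero K] [TopologicalSpace K]
    [SeparatelyContinuousMul K] {f : ℕ → K} {a : K}
    (hf : HasProd ({p | p.Prime}.mulIndicator f) a) {r : ℕ} (hr : r ≠ 0)
    (hr' : ∀ p ∈ r.primeFactors, f p ≠ 0) :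
    HasProd ({p | p.Prime ∧ ¬ p ∣ r}.mulIndicator f) (a / ∏ p ∈ r.primeFactors, f p) := by
  have hmem : ∀ p ∈ r.primeFactors, p ∈ {p : ℕ | p.Prime} := fun p hp ↦
    Nat.prime_of_mem_primeFactors hp
  have h := hf.congr_cofinite₀ (s := r.primeFactors)
    (g := {p | p.Prime ∧ ¬ p ∣ r}.mulIndicator f)
    (fun p hp ↦ by rw [Set.mulIndicator_of_mem (hmem p hp)]; exact hr' p hp)
    (fun p hp ↦ by
      rw [Nat.mem_primeFactors, not_and_or, not_and_or] at hp
      by_cases hpp : p.Prime <;> simp_all)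
  convert h using 1
  rw [prod_congr rfl fun p hp ↦
      Set.mulIndicator_of_notMem (fun h ↦ h.2 (Nat.dvd_of_mem_primeFactors hp)) f,
    prod_congr rfl fun p hp ↦ Set.mulIndicator_of_mem (hmem p hp) f,
    prod_const_one, one_div, div_eq_mul_inv]

namespace Kr

noncomputable def weight (p : ℕ) : ℝ := ((p : ℝ) ^ 2 - p - 1)⁻¹

noncomputable def eulerFactor (p : ℕ) : ℝ :=
  ((p : ℝ) * ((p : ℝ) ^ 2 - p - 1)) / (((p : ℝ) - 1) * ((p : ℝ) ^ 2 - 1))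

noncomputable def normalizer : ℝ := ∑' d, sqfreeProd (fun p ↦ weight p / p) d

theorem weight_nonneg {p : ℕ} (hp : p.Prime) : 0 ≤ weight p := by
  have : (2 : ℝ) ≤ p := by exact_mod_cast hp.two_le
  unfold weight
  exact inv_nonneg.2 (by nlinarith)

theorem weight_div_nonneg {p : ℕ} (hp : p.Prime) : 0 ≤ weight p / p :=
  div_nonneg (weight_nonneg hp) p.cast_nonneg

theorem weight_le {p : ℕ} (hp : p.Prime) : weight p ≤ 4 * ((p : ℝ) ^ 2)⁻¹ := by
  have : (2 : ℝ) ≤ p := by exact_mod_cast hp.two_le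
  rw [weight, ← div_eq_mul_inv, le_div_iff₀ (by positivity)]
  rw [inv_mul_eq_div, div_le_iff₀ (by nlinarith)]
  nlinarith

theorem summable_weight : Summable fun p : Nat.Primes ↦ weight p :=
  ((Real.summable_nat_pow_inv.2 one_lt_two).mul_left 4 |>.comp_injective
    Subtype.val_injective).of_nonneg_of_le (fun p ↦ weight_nonneg p.2) fun p ↦ weight_le p.2

theorem summable_weight_div : Summable fun p : Nat.Primes ↦ weight p / p :=
  summable_weight.of_nonneg_of_le (fun p ↦ weight_div_nonneg p.2)
    fun p ↦ div_le_self (weight_nonneg p.2) (by exact_mod_cast p.2.one_le)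

theorem eulerFactor_eq_inv {p : ℕ} (hp : p.Prime) : eulerFactor p = (1 + weight p / p)⁻¹ := by
  have hx : (2 : ℝ) ≤ p := by exact_mod_cast hp.two_le
  have hq : 0 < (p : ℝ) ^ 2 - p - 1 := by nlinarith
  have : (p : ℝ) ^ 2 - 1 ≠ 0 := by nlinarith
  have : (p : ℝ) - 1 ≠ 0 := by linarith
  rw [eulerFactor, weight]
  generalize hqd : (p : ℝ) ^ 2 - p - 1 = q at hq ⊢
  have : p * q + 1 ≠ 0 := by positivity
  field_simp
  rw [← hqd]
  ring

theorem eulerFactor_pos {p : ℕ} (hp : p.Prime) : 0 < eulerFactor p := by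
  have := weight_div_nonneg hp
  rw [eulerFactor_eq_inv hp]
  positivity

theorem inv_one_sub_inv_sq_div_eulerFactor {p : ℕ} (hp : p.Prime) :
    (1 - ((p : ℝ) ^ 2)⁻¹)⁻¹ / eulerFactor p = 1 + weight p := by
  have hx : (2 : ℝ) ≤ p := by exact_mod_cast hp.two_le
  have hq : 0 < (p : ℝ) ^ 2 - p - 1 := by nlinarith
  have : (p : ℝ) ^ 2 - 1 ≠ 0 := by nlinarith
  have : (p : ℝ) - 1 ≠ 0 := by linarith
  rw [eulerFactor, weight]
  generalize hqd : (p : ℝ) ^ 2 - p - 1 = q at hq ⊢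
  field_simp
  rw [← hqd]
  ring

theorem normalizer_eq : normalizer = ∑' d, sqfreeProd weight d / d := by
  simp only [normalizer, sqfreeProd_div_self]

theorem one_le_normalizer : 1 ≤ normalizer := by
  simpa [normalizer, (isMultiplicative_sqfreeProd _).map_one] using
    (summable_sqfreeProd (fun p ↦ weight_div_nonneg) summable_weight_div).le_tsum 1
      fun d _ ↦ sqfreeProd_nonneg (fun p ↦ weight_div_nonneg) d

theorem hasProd_eulerFactor :
    HasProd ({p | p.Prime}.mulIndicator eulerFactor) normalizer⁻¹ := by
  have h := (hasProd_one_add_sqfreeProd (fun p ↦ weight_div_nonneg) summable_weight_div).inv₀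
    (by linarith [one_le_normalizer] : normalizer ≠ 0)
  have hfun : {p | p.Prime}.mulIndicator eulerFactor =
      fun p ↦ ({p | p.Prime}.mulIndicator (fun p ↦ 1 + weight p / p) p)⁻¹ := by
    funext p
    by_cases hp : p.Prime <;> simp [hp, eulerFactor_eq_inv]
  rw [hfun]
  exact h

theorem Kr_eq_normalizer_inv_mul {r : ℕ} (hr : r ≠ 0) :
    Kr r = normalizer⁻¹ * (sqfreeProd weight * ζ) r := by
  have h := hasProd_eulerFactor.mulIndicator_not_dvd hr fun p hp ↦
    (eulerFactor_pos (Nat.prime_of_mem_primeFactors hp)).ne'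
  change _ * ∏' l : ({l : ℕ | l.Prime ∧ ¬ l ∣ r} : Set ℕ), eulerFactor l = _
  rw [_root_.tprod_subtype, h.tprod_eq, sqfreeProd_mul_zeta, prodPrimeFactors_apply hr,
    ← prod_congr rfl fun p hp ↦
      inv_one_sub_inv_sq_div_eulerFactor (Nat.prime_of_mem_primeFactors hp), prod_div_distrib]
  ring

end Kr

open Kr

theorem Kr_average :
    ∃ C : ℝ, 0 < C ∧ ∀ u v : ℝ, 0 ≤ u → 1 ≤ v →
      |(∑ r ∈ Finset.Ioc ⌊u⌋₊ ⌊u + v⌋₊, Kr r) - v| ≤ C := by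
  have hw : ∀ n, 0 ≤ sqfreeProd weight n := sqfreeProd_nonneg fun p ↦ weight_nonneg
  have hs : Summable (sqfreeProd weight) :=
    summable_sqfreeProd (fun p ↦ weight_nonneg) summable_weight
  set W := ∑' d, sqfreeProd weight d
  have hW : 0 ≤ W := tsum_nonneg hw
  have hS : 0 < normalizer := one_pos.trans_le one_le_normalizer
  refine ⟨W / normalizer + 1, by positivity, fun u v hu hv ↦ ?_⟩
  set a := ⌊u⌋₊
  set b := ⌊u + v⌋₊
  have hab : a ≤ b := Nat.floor_mono (by linarith)
  set X := ∑ r ∈ Ioc a b, (sqfreeProd weight * ζ) r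
  have hsum : ∑ r ∈ Ioc a b, Kr r = normalizer⁻¹ * X := by
    rw [mul_sum]
    exact sum_congr rfl fun r hr ↦ Kr_eq_normalizer_inv_mul (by linarith [(mem_Ioc.1 hr).1])
  have hcount : |X - ((b : ℝ) - a) * normalizer| ≤ W := by
    simpa only [normalizer_eq] using abs_sum_Ioc_mul_zeta_sub_le hw hs hab
  have hlen : |((b : ℝ) - a) - v| ≤ 1 := by
    have := Nat.floor_le hu
    have := Nat.lt_floor_add_one u
    have := Nat.floor_le (by linarith : 0 ≤ u + v)
    have := Nat.lt_floor_add_one (u + v)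
    rw [abs_le]
    constructor <;> linarith
  calc |∑ r ∈ Ioc a b, Kr r - v|
      = |normalizer⁻¹ * (X - ((b : ℝ) - a) * normalizer) + (((b : ℝ) - a) - v)| := by
        rw [hsum]
        congr 1
        field_simp
        ring
    _ ≤ normalizer⁻¹ * W + 1 := by
        grw [abs_add_le, abs_mul, abs_of_pos (inv_pos.2 hS), hcount, hlen]
    _ = W / normalizer + 1 := by rw [inv_mul_eq_div]
end

section
/- There exists an absolute constant C > 0 such that for every prime p and every integer r with 0 < r < 2√p, one has H(r² − 4p) ≤ C·√(4p − r²)·(log 4p)². -/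
open scoped Classical

/-- `L(1,χ_d) = lim_{N→∞} Σ_{n=1}^N (d/n)/n`, with `(d/n)` the Jacobi symbol. -/
noncomputable def Lchi (d : ℤ) : ℝ :=
  Filter.limUnder Filter.atTop (fun N : ℕ => ∑ n ∈ Finset.Icc 1 N, (jacobiSym d n : ℝ) / n)

/-- The Kronecker class number `H(D) = (1/π) Σ_{D = d f², d ≡ 0,1 mod 4} √|d| L(1,χ_d)`. -/
noncomputable def KH (D : ℤ) : ℝ :=
  (1 / Real.pi) * ∑ f ∈ Finset.Icc 1 D.natAbs,
    if (f : ℤ) ^ 2 ∣ D ∧ (D / (f : ℤ) ^ 2 % 4 = 0 ∨ D / (f : ℤ) ^ 2 % 4 = 1) then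
      Real.sqrt (D / (f : ℤ) ^ 2).natAbs * Lchi (D / (f : ℤ) ^ 2)
    else 0

/-!
Every `d = D / f²` in the sum defining `H(D)` is negative, and for negative `d` we show
`|L(1, χ_d)| ≤ 65 + 2 log |d|`; since `√|d| = √|D| / f`, summing over `f` costs a harmonic
factor `1 + log |D|`, whence `H(D) ≪ √|D| log² |D|`.

For the `L`-value: restricted to odd arguments, `J(d | ·)` has period `8|d|` and changes sign
under `n ↦ 8|d| - n` because `J(d | 8|d| - 1) = -1`, so its partial sums are bounded by `8|d|`.
Splitting off the even arguments with `J(d | 2m) = J(d | 2) J(d | m)` bounds the partial sums of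
`J(d | ·)` up to `N` by `8|d| (1 + log₂ N) ≤ 16|d| √N`. Abel summation then shows that
`Σ J(d | n) / n` converges, with tail beyond `|d|²` at most `64`; the first `|d|²` terms
contribute at most `1 + 2 log |d|`.
-/

open Finset Filter Topology Real NumberTheorySymbols

lemma inv_sub_inv_succ_mul_sqrt_le {i : ℕ} (hi : 1 ≤ i) :
    ((i : ℝ)⁻¹ - ((i + 1 : ℕ) : ℝ)⁻¹) * √i ≤ 2 / √i - 2 / √(i + 1 : ℕ) := by
  push_cast
  set a := √i
  set b := √((i : ℝ) + 1)
  have ha2 : a ^ 2 = i := sq_sqrt (by positivity)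
  have hb2 : b ^ 2 = i + 1 := sq_sqrt (by positivity)
  have ha : 0 < a := sqrt_pos.mpr (by positivity)
  have hab : a ≤ b := sqrt_le_sqrt (by linarith)
  have hb : 0 < b := ha.trans_le hab
  calc ((i : ℝ)⁻¹ - ((i : ℝ) + 1)⁻¹) * a = (b ^ 2 - a ^ 2) / (a * b ^ 2) := by
        rw [← hb2, ← ha2]; field_simp
    _ ≤ 2 * b * (b - a) / (a * b ^ 2) := by gcongr; nlinarith
    _ = 2 / a - 2 / b := by field_simp

lemma sum_range_succ_eq_add_sum_Ioc {M : Type*} [AddCommMonoid M] (f : ℕ → M) (N : ℕ) :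
    ∑ i ∈ range (N + 1), f i = f 0 + ∑ i ∈ Ioc 0 N, f i := by
  rw [range_eq_Ico, sum_eq_sum_Ico_succ_bot N.succ_pos]
  rfl

lemma Function.Periodic.sum_range_eq_sum_range_mod {M : Type*} [AddCommMonoid M] {f : ℕ → M}
    {P : ℕ} (hf : Function.Periodic f P) (hP : ∑ i ∈ range P, f i = 0) (N : ℕ) :
    ∑ i ∈ range N, f i = ∑ i ∈ range (N % P), f i := by
  have hshift (n : ℕ) : ∑ i ∈ range (P + n), f i = ∑ i ∈ range n, f i := by
    rw [sum_range_add, hP, zero_add]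
    exact sum_congr rfl fun i _ => by rw [add_comm, hf]
  conv_lhs => rw [← Nat.mod_add_div N P]
  induction N / P with
  | zero => rfl
  | succ k ih => rw [Nat.mul_succ, ← add_assoc, add_comm _ P, hshift, ih]

lemma sum_Ioc_sub_succ {G : Type*} [AddCommGroup G] (φ : ℕ → G) {m n : ℕ} (h : m ≤ n) :
    ∑ i ∈ Ioc m n, (φ i - φ (i + 1)) = φ (m + 1) - φ (n + 1) := by
  rw [← Ico_add_one_add_one_eq_Ioc, ← neg_sub, ← sum_Ico_sub φ (by omega), ← sum_neg_distrib]
  simp only [neg_sub]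

lemma abs_sum_Ioc_inv_sub_inv_mul_le {G : ℕ → ℝ} {K : ℝ} (hK : 0 ≤ K)
    (hG : ∀ k, |G (k + 1)| ≤ K * √k) {M N : ℕ} (hM : 1 ≤ M) (hMN : M < N) :
    |∑ i ∈ Ioc M (N - 1), (((i + 1 : ℕ) : ℝ)⁻¹ - (i : ℝ)⁻¹) * G (i + 1)| ≤ 2 * K / √M := by
  calc _ ≤ ∑ i ∈ Ioc M (N - 1), K * (2 / √i - 2 / √(i + 1 : ℕ)) := by
        refine (abs_sum_le_sum_abs _ _).trans (sum_le_sum fun i hi => ?_)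
        have hi : 1 ≤ i := hM.trans (mem_Ioc.mp hi).1.le
        have hdec : ((i + 1 : ℕ) : ℝ)⁻¹ ≤ (i : ℝ)⁻¹ :=
          inv_anti₀ (by exact_mod_cast hi) (by exact_mod_cast i.le_succ)
        rw [abs_mul, abs_sub_comm, abs_of_nonneg (sub_nonneg.mpr hdec)]
        calc _ ≤ ((i : ℝ)⁻¹ - ((i + 1 : ℕ) : ℝ)⁻¹) * (K * √i) := by gcongr; exact hG i
          _ = K * (((i : ℝ)⁻¹ - ((i + 1 : ℕ) : ℝ)⁻¹) * √i) := by ring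
          _ ≤ _ := by gcongr; exact inv_sub_inv_succ_mul_sqrt_le hi
    _ = K * (2 / √(M + 1 : ℕ) - 2 / √(N - 1 + 1 : ℕ)) := by
        rw [← mul_sum, sum_Ioc_sub_succ (fun i : ℕ => 2 / √i) (by omega)]
    _ ≤ K * (2 / √M) := by
        have h1 : 2 / √((M + 1 : ℕ) : ℝ) ≤ 2 / √M := by gcongr; exact_mod_cast M.le_succ
        have h2 : 0 ≤ 2 / √((N - 1 + 1 : ℕ) : ℝ) := by positivity
        exact mul_le_mul_of_nonneg_left (by linarith) hK
    _ = 2 * K / √M := by ring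

lemma mul_sqrt_div_le_div_sqrt {K : ℝ} (hK : 0 ≤ K) {m n : ℕ} (hm : 1 ≤ m) (hmn : m ≤ n) :
    K * √n / n ≤ K / √m := by
  rw [mul_div_assoc, sqrt_div_self', ← div_eq_mul_one_div]
  gcongr

theorem abs_sum_Ioc_div_le_of_abs_sum_le_sqrt {g : ℕ → ℝ} {K : ℝ}
    (hg : ∀ k, |∑ i ∈ Ioc 0 k, g i| ≤ K * √k) {M N : ℕ} (hM : 1 ≤ M) (hMN : M ≤ N) :
    |∑ n ∈ Ioc M N, g n / n| ≤ 4 * K / √M := by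
  have hK : 0 ≤ K := by simpa using (abs_nonneg _).trans (hg 1)
  rcases hMN.eq_or_lt with rfl | hlt
  · simp only [Ioc_self, sum_empty, abs_zero]; positivity
  set G : ℕ → ℝ := fun k => ∑ i ∈ range k, (if i = 0 then 0 else g i)
  have hG : ∀ k, |G (k + 1)| ≤ K * √k := fun k => by
    rw [show G (k + 1) = _ from sum_range_succ_eq_add_sum_Ioc _ k, if_pos rfl, zero_add,
      sum_congr rfl fun i hi => if_neg (mem_Ioc.mp hi).1.ne']
    exact hg k
  have hparts : ∑ n ∈ Ioc M N, g n / n = (N : ℝ)⁻¹ * G (N + 1) - ((M + 1 : ℕ) : ℝ)⁻¹ * G (M + 1)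
      - ∑ i ∈ Ioc M (N - 1), (((i + 1 : ℕ) : ℝ)⁻¹ - (i : ℝ)⁻¹) * G (i + 1) := by
    simp only [G, ← smul_eq_mul (a := _⁻¹), ← smul_eq_mul (a := _ - _)]
    rw [← sum_Ioc_by_parts (fun i : ℕ => (i : ℝ)⁻¹) (fun i => if i = 0 then 0 else g i) hlt]
    refine sum_congr rfl fun n hn => ?_
    rw [smul_eq_mul, if_neg (by simp at hn; omega), div_eq_inv_mul]
  have hN : |(N : ℝ)⁻¹ * G (N + 1)| ≤ K / √M := by
    rw [abs_mul, abs_inv, Nat.abs_cast, inv_mul_eq_div]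
    exact (div_le_div_of_nonneg_right (hG N) N.cast_nonneg).trans
      (mul_sqrt_div_le_div_sqrt hK hM hMN)
  have hM' : |((M + 1 : ℕ) : ℝ)⁻¹ * G (M + 1)| ≤ K / √M := by
    rw [abs_mul, abs_inv, Nat.abs_cast, inv_mul_eq_div]
    calc _ ≤ K * √M / (M + 1 : ℕ) := by gcongr; exact hG M
      _ ≤ K * √M / M := by gcongr; exact_mod_cast M.le_succ
      _ ≤ K / √M := mul_sqrt_div_le_div_sqrt hK hM le_rfl
  rw [hparts]
  calc _ ≤ |(N : ℝ)⁻¹ * G (N + 1)| + |((M + 1 : ℕ) : ℝ)⁻¹ * G (M + 1)|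
        + |∑ i ∈ Ioc M (N - 1), (((i + 1 : ℕ) : ℝ)⁻¹ - (i : ℝ)⁻¹) * G (i + 1)| :=
        (abs_sub _ _).trans (add_le_add_left (abs_sub _ _) _)
    _ ≤ K / √M + K / √M + 2 * K / √M := by
        gcongr
        exact abs_sum_Ioc_inv_sub_inv_mul_le hK hG hM hlt
    _ = 4 * K / √M := by ring

theorem exists_tendsto_sum_div_of_abs_sum_le_sqrt {g : ℕ → ℝ} {K : ℝ}
    (hg : ∀ k, |∑ i ∈ Ioc 0 k, g i| ≤ K * √k) {M : ℕ} (hM : 1 ≤ M) :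
    ∃ l, Tendsto (fun N => ∑ n ∈ Ioc 0 N, g n / n) atTop (𝓝 l) ∧
      |l - ∑ n ∈ Ioc 0 M, g n / n| ≤ 4 * K / √M := by
  set A : ℕ → ℝ := fun N => ∑ n ∈ Ioc 0 N, g n / n
  have hA {m n : ℕ} (hm : 1 ≤ m) (hmn : m ≤ n) : |A n - A m| ≤ 4 * K / √m := by
    rw [show A n = A m + _ from (sum_Ioc_consecutive _ m.zero_le hmn).symm, add_sub_cancel_left]
    exact abs_sum_Ioc_div_le_of_abs_sum_le_sqrt hg hm hmn
  have hcauchy : CauchySeq A := by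
    rw [← cauchySeq_shift 1]
    refine cauchySeq_of_le_tendsto_0' (fun n => 4 * K / √((n + 1 : ℕ) : ℝ))
      (fun n m hnm => ?_) ?_
    · rw [dist_comm, Real.dist_eq]
      exact hA (by omega) (by omega)
    · exact tendsto_const_nhds.div_atTop <| tendsto_sqrt_atTop.comp <|
        tendsto_natCast_atTop_atTop.comp (tendsto_add_atTop_nat 1)
  obtain ⟨l, hl⟩ := cauchySeq_tendsto_of_complete hcauchy
  refine ⟨l, hl, le_of_tendsto (hl.sub_const _).abs ?_⟩
  filter_upwards [eventually_ge_atTop M] with N hN using hA hM hN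

lemma jacobiSym_eq_of_modEq (d : ℤ) {b₁ b₂ : ℕ} (h₁ : Odd b₁) (h₂ : Odd b₂)
    (h : b₁ ≡ b₂ [MOD 4 * d.natAbs]) : J(d | b₁) = J(d | b₂) := by
  rw [jacobiSym.mod_right d h₁, jacobiSym.mod_right d h₂, h]

lemma jacobiSym_natCast_eight_mul_sub_one (q : ℕ) : J(q | 8 * q - 1) = 1 := by
  rcases eq_or_ne q 0 with rfl | hq
  · exact jacobiSym.zero_right _
  set m := 8 * q - 1
  have hm : Odd m := Nat.odd_iff.mpr (by omega)
  obtain ⟨a, v, hv2, rfl⟩ := Nat.exists_eq_pow_mul_and_not_dvd hq 2 (by norm_num)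
  have hv : v % 2 = 1 := Nat.two_dvd_ne_zero.mp hv2
  have h2 : J(2 | m) = 1 := by
    rw [jacobiSym.at_two hm, ZMod.χ₈_nat_eq_if_mod_eight]
    simp [show m % 2 = 1 by omega, show m % 8 = 7 by omega]
  have hmv : J(m | v) = ZMod.χ₄ v := by
    rw [← jacobiSym.at_neg_one (Nat.odd_iff.mpr hv)]
    refine jacobiSym.mod_left' (Int.modEq_iff_dvd.mpr ⟨-(8 * 2 ^ a), ?_⟩)
    simp only [m]
    rw [Nat.cast_sub (by omega)]
    push_cast
    ring
  -- Since `m ≡ 3 (mod 4)`, reciprocity contributes the sign `χ₄ v`, and `J(m | v) = χ₄ v` too.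
  have h3 : J(v | m) = 1 := by
    rw [← jacobiSym.quadratic_reciprocity_if hv (by omega), hmv, ZMod.χ₄_nat_eq_if_mod_four]
    rcases Nat.odd_mod_four_iff.mp hv with h | h <;> simp [h, hv, show m % 4 = 3 by omega]
  push_cast
  rw [jacobiSym.mul_left, jacobiSym.pow_left, h2, h3, one_pow, one_mul]

lemma jacobiSym_eight_mul_natAbs_sub_one {d : ℤ} (hd : d < 0) :
    J(d | 8 * d.natAbs - 1) = -1 := by
  have hm : Odd (8 * d.natAbs - 1) := Nat.odd_iff.mpr (by omega)
  rw [show d = -1 * (d.natAbs : ℤ) by omega, jacobiSym.mul_left, Int.natAbs_mul,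
    Int.natAbs_neg, Int.natAbs_one, one_mul, Int.natAbs_natCast,
    jacobiSym_natCast_eight_mul_sub_one, jacobiSym.at_neg_one hm, ZMod.χ₄_nat_eq_if_mod_four]
  simp [show (8 * d.natAbs - 1) % 2 = 1 by omega, show (8 * d.natAbs - 1) % 4 = 3 by omega]

/- `J(d | ·)` itself is not periodic when `d` is odd (then `J(d | 2) = 1`, unlike the Kronecker
symbol), but its restriction to odd arguments is. -/
noncomputable def jacobiSymOdd (d : ℤ) (n : ℕ) : ℤ := if Odd n then J(d | n) else 0

lemma abs_jacobiSym_le_one (d : ℤ) (n : ℕ) : |J(d | n)| ≤ 1 := by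
  rcases jacobiSym.trichotomy d n with h | h | h <;> simp [h]

lemma abs_jacobiSymOdd_le_one (d : ℤ) (n : ℕ) : |jacobiSymOdd d n| ≤ 1 := by
  unfold jacobiSymOdd
  split_ifs
  exacts [abs_jacobiSym_le_one d n, by simp]

lemma jacobiSymOdd_periodic (d : ℤ) : Function.Periodic (jacobiSymOdd d) (8 * d.natAbs) := by
  intro n
  have hpar : Odd (n + 8 * d.natAbs) ↔ Odd n := by
    simp only [Nat.odd_iff]; omega
  unfold jacobiSymOdd
  by_cases hn : Odd n
  · rw [if_pos (hpar.mpr hn), if_pos hn]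
    exact jacobiSym_eq_of_modEq d (hpar.mpr hn) hn
      (Nat.modEq_iff_dvd' (by omega) |>.mpr ⟨2, by omega⟩).symm
  · rw [if_neg (mt hpar.mp hn), if_neg hn]

lemma Nat.eight_mul_sub_modEq_mul_eight_mul_sub_one {q m : ℕ} (h1 : 1 ≤ m) (hm : m ≤ 8 * q) :
    8 * q - m ≡ m * (8 * q - 1) [MOD 4 * q] := by
  refine Nat.modEq_iff_dvd' ((Nat.sub_le_sub_left h1 _).trans (Nat.le_mul_of_pos_left _ h1))
    |>.mpr ⟨2 * (m - 1), Nat.sub_eq_of_eq_add ?_⟩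
  zify [hm, h1, (by omega : 1 ≤ 8 * q)]
  ring

lemma jacobiSymOdd_eight_mul_natAbs_sub {d : ℤ} (hd : d < 0) {m : ℕ} (hm : m ≤ 8 * d.natAbs) :
    jacobiSymOdd d (8 * d.natAbs - m) = -jacobiSymOdd d m := by
  set q := d.natAbs
  unfold jacobiSymOdd
  by_cases hmo : Odd m
  · have hm1 : m % 2 = 1 := Nat.odd_iff.mp hmo
    have hso : Odd (8 * q - m) := Nat.odd_iff.mpr (by omega)
    have hmul : Odd (m * (8 * q - 1)) := hmo.mul (Nat.odd_iff.mpr (by omega))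
    rw [if_pos hso, if_pos hmo]
    calc J(d | 8 * q - m) = J(d | m * (8 * q - 1)) := jacobiSym_eq_of_modEq d hso hmul
          (Nat.eight_mul_sub_modEq_mul_eight_mul_sub_one (by omega) hm)
      _ = -J(d | m) := by
        rw [jacobiSym.mul_right' d (by omega) (by omega), jacobiSym_eight_mul_natAbs_sub_one hd,
          mul_neg_one]
  · have hse : ¬ Odd (8 * q - m) := by simp only [Nat.odd_iff] at hmo ⊢; omega
    rw [if_neg hse, if_neg hmo, neg_zero]

lemma sum_range_jacobiSymOdd_eight_mul_natAbs {d : ℤ} (hd : d < 0) :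
    ∑ n ∈ range (8 * d.natAbs), jacobiSymOdd d n = 0 := by
  set P := 8 * d.natAbs
  have hP : jacobiSymOdd d P = 0 := by
    rw [← zero_add P, jacobiSymOdd_periodic d 0]; simp [jacobiSymOdd]
  have hrefl := sum_range_reflect (jacobiSymOdd d) (P + 1)
  rw [sum_congr rfl fun j hj => by
      rw [Nat.add_sub_cancel, jacobiSymOdd_eight_mul_natAbs_sub hd (by simp at hj; omega)],
    sum_neg_distrib, sum_range_succ, hP, add_zero] at hrefl
  linarith

lemma abs_sum_Ioc_jacobiSymOdd_le {d : ℤ} (hd : d < 0) (N : ℕ) :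
    |∑ n ∈ Ioc 0 N, jacobiSymOdd d n| ≤ 8 * d.natAbs := by
  have hP : 0 < 8 * d.natAbs := by omega
  rw [← zero_add (∑ n ∈ Ioc 0 N, _), ← show jacobiSymOdd d 0 = 0 by simp [jacobiSymOdd],
    ← sum_range_succ_eq_add_sum_Ioc,
    (jacobiSymOdd_periodic d).sum_range_eq_sum_range_mod
      (sum_range_jacobiSymOdd_eight_mul_natAbs hd)]
  calc _ ≤ ∑ n ∈ range ((N + 1) % (8 * d.natAbs)), |jacobiSymOdd d n| := abs_sum_le_sum_abs _ _
    _ ≤ ∑ n ∈ range ((N + 1) % (8 * d.natAbs)), 1 :=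
        sum_le_sum fun n _ => abs_jacobiSymOdd_le_one d n
    _ ≤ 8 * d.natAbs := by
      rw [sum_const, card_range, nsmul_one]
      exact_mod_cast (Nat.mod_lt _ hP).le

lemma sum_Ioc_jacobiSym_eq (d : ℤ) (N : ℕ) :
    ∑ n ∈ Ioc 0 N, J(d | n) =
      ∑ n ∈ Ioc 0 N, jacobiSymOdd d n + J(d | 2) * ∑ n ∈ Ioc 0 (N / 2), J(d | n) := by
  rw [← sum_filter_add_sum_filter_not (Ioc 0 N) Odd, mul_sum]
  congr 1
  · exact (sum_filter _ _).trans rfl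
  refine sum_nbij' (· / 2) (2 * ·) ?_ ?_ ?_ ?_ ?_ <;>
    simp only [mem_filter, mem_Ioc, Nat.not_odd_iff_even, Nat.even_iff] <;> intros <;> try omega
  rw [← jacobiSym.mul_right' d two_ne_zero (by omega)]
  congr 1
  omega

lemma abs_sum_Ioc_jacobiSym_le {d : ℤ} (hd : d < 0) (N : ℕ) :
    |∑ n ∈ Ioc 0 N, J(d | n)| ≤ 8 * d.natAbs * (1 + Nat.log 2 N) := by
  induction N using Nat.strong_induction_on with
  | _ N ih =>
    have hhalf : |∑ n ∈ Ioc 0 (N / 2), J(d | n)| ≤ 8 * d.natAbs * Nat.log 2 N := by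
      rcases N.lt_or_ge 2 with hN | hN
      · simp only [Nat.div_eq_of_lt hN, Ioc_self, sum_empty, abs_zero]
        positivity
      · calc _ ≤ 8 * d.natAbs * (1 + Nat.log 2 (N / 2) : ℤ) := ih _ (by omega)
          _ = 8 * d.natAbs * Nat.log 2 N := by
            rw [Nat.log_div_base, Nat.cast_sub (Nat.log_pos one_lt_two hN)]
            ring
    rw [sum_Ioc_jacobiSym_eq]
    calc _ ≤ |∑ n ∈ Ioc 0 N, jacobiSymOdd d n| + |J(d | 2) * ∑ n ∈ Ioc 0 (N / 2), J(d | n)| :=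
          abs_add_le _ _
      _ ≤ 8 * d.natAbs + 1 * (8 * d.natAbs * Nat.log 2 N) := by
          rw [abs_mul]
          gcongr
          exacts [abs_sum_Ioc_jacobiSymOdd_le hd N, abs_jacobiSym_le_one d 2]
      _ = _ := by ring

lemma Nat.succ_sq_le_four_mul_two_pow (j : ℕ) : (j + 1) ^ 2 ≤ 4 * 2 ^ j := by
  induction j with
  | zero => norm_num
  | succ j ih =>
    rcases j with _ | _ | j
    · norm_num
    · norm_num
    · ring_nf at ih ⊢; nlinarith

lemma one_add_log_two_le_two_mul_sqrt {k : ℕ} (hk : k ≠ 0) :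
    1 + (Nat.log 2 k : ℝ) ≤ 2 * √k := by
  have h : (1 + Nat.log 2 k) ^ 2 ≤ 4 * k := by
    rw [add_comm]
    exact (Nat.succ_sq_le_four_mul_two_pow _).trans (by gcongr; exact Nat.pow_log_le_self 2 hk)
  rw [show 2 * √k = √(4 * k) by rw [sqrt_mul' _ (Nat.cast_nonneg k)]; norm_num]
  exact le_sqrt_of_sq_le (by exact_mod_cast h)

lemma abs_sum_Ioc_jacobiSym_le_sqrt {d : ℤ} (hd : d < 0) (N : ℕ) :
    |∑ n ∈ Ioc 0 N, (J(d | n) : ℝ)| ≤ 16 * d.natAbs * √N := by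
  rcases eq_or_ne N 0 with rfl | hN
  · simp
  calc _ = ((|∑ n ∈ Ioc 0 N, J(d | n)| : ℤ) : ℝ) := by push_cast; rfl
    _ ≤ ((8 * d.natAbs * (1 + Nat.log 2 N) : ℤ) : ℝ) :=
        Int.cast_le.mpr (abs_sum_Ioc_jacobiSym_le hd N)
    _ ≤ 8 * d.natAbs * (2 * √N) := by
        simp only [Int.cast_mul, Int.cast_natCast, Int.cast_add, Int.cast_one, Int.cast_ofNat]
        gcongr
        exact one_add_log_two_le_two_mul_sqrt hN
    _ = _ := by ring

lemma abs_sum_Ioc_div_le_one_add_log {g : ℕ → ℝ} (hg : ∀ n, |g n| ≤ 1) (N : ℕ) :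
    |∑ n ∈ Ioc 0 N, g n / n| ≤ 1 + log N := by
  calc _ ≤ ∑ n ∈ Ioc 0 N, |g n / n| := abs_sum_le_sum_abs _ _
    _ ≤ ∑ n ∈ Icc 1 N, (n : ℝ)⁻¹ := sum_le_sum fun n _ => by
        rw [abs_div, Nat.abs_cast, div_eq_mul_inv]
        exact mul_le_of_le_one_left (by positivity) (hg n)
    _ = harmonic N := by simp [harmonic_eq_sum_Icc]
    _ ≤ 1 + log N := harmonic_le_one_add_log N

theorem abs_Lchi_le {d : ℤ} (hd : d < 0) : |Lchi d| ≤ 65 + 2 * log d.natAbs := by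
  set q := d.natAbs
  have hq : (0 : ℝ) < q := by simp [q]; omega
  obtain ⟨l, hl, hlM⟩ := exists_tendsto_sum_div_of_abs_sum_le_sqrt
    (abs_sum_Ioc_jacobiSym_le_sqrt hd) (M := q * q) (by simp [q]; omega)
  have hA := abs_sum_Ioc_div_le_one_add_log (g := fun n => (J(d | n) : ℝ))
    (fun n => by exact_mod_cast abs_jacobiSym_le_one d n) (q * q)
  rw [show Lchi d = l from hl.limUnder_eq]
  set A := ∑ n ∈ Ioc 0 (q * q), (J(d | n) : ℝ) / n
  calc |l| ≤ |A| + |l - A| := sub_le_iff_le_add'.mp (abs_sub_abs_le_abs_sub _ _)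
    _ ≤ (1 + log (q * q : ℕ)) + 4 * (16 * q) / √(q * q : ℕ) := add_le_add hA hlM
    _ = 65 + 2 * log q := by
        push_cast
        rw [log_mul hq.ne' hq.ne', sqrt_mul_self hq.le]
        field_simp
        ring

lemma sqrt_natAbs_ediv_sq {D : ℤ} {f : ℕ} (hf : (f : ℤ) ^ 2 ∣ D) :
    √((D / (f : ℤ) ^ 2).natAbs : ℝ) = √(D.natAbs : ℝ) / f := by
  rcases eq_or_ne f 0 with rfl | hf0
  · simp
  obtain ⟨e, rfl⟩ := hf
  rw [Int.mul_ediv_cancel_left _ (by positivity), Int.natAbs_mul, Int.natAbs_pow,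
    Int.natAbs_natCast, Nat.cast_mul, Nat.cast_pow, sqrt_mul' _ (by positivity),
    sqrt_sq (Nat.cast_nonneg f), mul_div_cancel_left₀ _ (by positivity)]

theorem KH_le_of_abs_Lchi_le {D : ℤ} (hD : D < 0) {B : ℝ}
    (hB : ∀ e : ℤ, e < 0 → e.natAbs ≤ D.natAbs → |Lchi e| ≤ B) :
    KH D ≤ 1 / π * (√(D.natAbs : ℝ) * B * (1 + log D.natAbs)) := by
  have hB0 : 0 ≤ B := (abs_nonneg _).trans (hB D hD le_rfl)
  have hterm : ∀ f ∈ Icc 1 D.natAbs,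
      (if (f : ℤ) ^ 2 ∣ D ∧ (D / (f : ℤ) ^ 2 % 4 = 0 ∨ D / (f : ℤ) ^ 2 % 4 = 1) then
        √((D / (f : ℤ) ^ 2).natAbs : ℝ) * Lchi (D / (f : ℤ) ^ 2) else 0)
        ≤ √(D.natAbs : ℝ) * B * (f : ℝ)⁻¹ := by
    intro f hf
    have hf1 : 1 ≤ f := (mem_Icc.mp hf).1
    split_ifs with h
    · have he : D / (f : ℤ) ^ 2 < 0 := Int.ediv_neg_of_neg_of_pos hD (by positivity)
      rw [sqrt_natAbs_ediv_sq h.1, div_eq_mul_inv, mul_right_comm]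
      gcongr
      exact (le_abs_self _).trans (hB _ he (Int.natAbs_ediv_le_natAbs _ _))
    · positivity
  unfold KH
  gcongr
  calc _ ≤ ∑ f ∈ Icc 1 D.natAbs, √(D.natAbs : ℝ) * B * (f : ℝ)⁻¹ := sum_le_sum hterm
    _ = √(D.natAbs : ℝ) * B * harmonic D.natAbs := by simp [harmonic_eq_sum_Icc, mul_sum]
    _ ≤ _ := by gcongr; exact harmonic_le_one_add_log _

theorem KH_le {D : ℤ} (hD : D < 0) :
    KH D ≤ 1 / π * (√(D.natAbs : ℝ) * (65 + 2 * log D.natAbs) * (1 + log D.natAbs)) :=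
  KH_le_of_abs_Lchi_le hD fun e he hle => (abs_Lchi_le he).trans <| by
    gcongr
    exact Nat.cast_pos.mpr (Int.natAbs_pos.mpr he.ne)

theorem KH_pointwise_bound :
    ∃ C : ℝ, 0 < C ∧ ∀ p : ℕ, p.Prime → ∀ r : ℤ, 0 < r → (r : ℝ) < 2 * Real.sqrt p →
      KH (r ^ 2 - 4 * (p : ℤ)) ≤
        C * Real.sqrt (4 * p - (r : ℝ) ^ 2) * Real.log (4 * p) ^ 2 := by
  refine ⟨134 / 3, by norm_num, fun p hp r hr hrp => ?_⟩
  set D := r ^ 2 - 4 * (p : ℤ)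
  have hp2 : (2 : ℝ) ≤ p := by exact_mod_cast hp.two_le
  have hr2 : (r : ℝ) ^ 2 < 4 * p := by
    have : (r : ℝ) ^ 2 < (2 * √p) ^ 2 := by gcongr
    rwa [mul_pow, sq_sqrt (by linarith), show (2 : ℝ) ^ 2 = 4 by norm_num] at this
  have hD : D < 0 := by simp only [D]; exact_mod_cast (by linarith : (r : ℝ) ^ 2 - 4 * p < 0)
  have hDabs : (D.natAbs : ℝ) = 4 * p - r ^ 2 := by
    rw [Nat.cast_natAbs, Int.cast_abs, abs_of_neg (by exact_mod_cast hD)]; push_cast [D]; ring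
  have hlog : 1 ≤ log (4 * p) := by
    rw [le_log_iff_exp_le (by positivity)]; linarith [exp_one_lt_d9]
  have hlogD : log (4 * p - r ^ 2) ≤ log (4 * p) := log_le_log (by linarith) (by nlinarith)
  have hlogD0 : 0 ≤ log (4 * p - r ^ 2) := hDabs ▸ log_natCast_nonneg D.natAbs
  have hpi : 1 / π ≤ 1 / 3 := by gcongr; exact pi_gt_three.le
  calc KH D ≤ 1 / π * (√(D.natAbs : ℝ) * (65 + 2 * log D.natAbs) * (1 + log D.natAbs)) := KH_le hD
    _ ≤ 1 / 3 * (√(4 * p - r ^ 2) * (67 * log (4 * p)) * (2 * log (4 * p))) := by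
        rw [hDabs]
        gcongr <;> linarith
    _ = 134 / 3 * √(4 * p - r ^ 2) * log (4 * p) ^ 2 := by ring
end
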